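/- Let 𝒮 ⊆ 𝒦ₖⁿ be a family of cubes of the k-subdivision of I^n. Then ⋃𝒮 is connected if and only if the index set j^{-1}[𝒮] ⊆ {1,…,k}^n is 1-connected in the ℓ^∞ metric (i.e., any two indices are joined by a finite sequence in the set with consecutive terms at ℓ^∞-distance ≤ 1). -/
import Mathlib


/-- The cube of the `k`-subdivision of `Iⁿ` indexed by `i ∈ {0,…,k-1}ⁿ`. -/
def subcube (n k : ℕ) (i : Fin n → Fin k) : Set (Fin n → ℝ) :=
  {x | ∀ s : Fin n, (i s : ℝ) / k ≤ x s ∧ x s ≤ ((i s : ℝ) + 1) / k}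

/-- A set of indices in `{0,…,k-1}ⁿ` is 1-connected: any two of its points are joined by a
finite sequence in the set with consecutive terms at `ℓ∞`-distance at most `1`. -/
def OneConnectedIdx (n k : ℕ) (P : Set (Fin n → Fin k)) : Prop :=
  ∀ p ∈ P, ∀ q ∈ P, ∃ (N : ℕ) (c : Fin (N + 1) → (Fin n → Fin k)),
    (∀ t, c t ∈ P) ∧ c 0 = p ∧ c (Fin.last N) = q ∧
    ∀ (t : Fin N) (j : Fin n), |((c t.castSucc j : ℕ) : ℤ) - ((c t.succ j : ℕ) : ℤ)| ≤ 1

namespace SubcubeAux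

variable {n k : ℕ}

/-- Adjacency of indices: `ℓ∞`-distance at most 1. -/
def Adj (p q : Fin n → Fin k) : Prop :=
  ∀ j : Fin n, |((p j : ℕ) : ℤ) - ((q j : ℕ) : ℤ)| ≤ 1

lemma subcube_eq_pi (i : Fin n → Fin k) :
    subcube n k i = Set.pi Set.univ (fun s => Set.Icc ((i s : ℝ) / k) (((i s : ℝ) + 1) / k)) := by
  ext x
  simp only [subcube, Set.mem_setOf_eq, Set.mem_univ_pi, Set.mem_Icc]

lemma isClosed_subcube (i : Fin n → Fin k) : IsClosed (subcube n k i) := by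
  rw [subcube_eq_pi]
  exact isClosed_set_pi fun s _ => isClosed_Icc

lemma convex_subcube (i : Fin n → Fin k) : Convex ℝ (subcube n k i) := by
  rw [subcube_eq_pi]
  exact convex_pi fun s _ => convex_Icc _ _

lemma subcube_nonempty (hk : 1 ≤ k) (i : Fin n → Fin k) : (subcube n k i).Nonempty := by
  have hk0 : (0 : ℝ) < k := by exact_mod_cast hk
  refine ⟨fun s => (i s : ℝ) / k, fun s => ⟨le_refl _, ?_⟩⟩
  rw [div_le_div_iff_of_pos_right hk0]
  linarith

lemma adj_of_inter (hk : 1 ≤ k) {p q : Fin n → Fin k}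
    (h : (subcube n k p ∩ subcube n k q).Nonempty) : Adj p q := by
  have hk0 : (0 : ℝ) < k := by exact_mod_cast hk
  obtain ⟨x, hx, hy⟩ := h
  intro j
  have h1 : ((p j : ℕ) : ℝ) ≤ ((q j : ℕ) : ℝ) + 1 := by
    have := (hx j).1.trans (hy j).2
    rwa [div_le_div_iff_of_pos_right hk0] at this
  have h2 : ((q j : ℕ) : ℝ) ≤ ((p j : ℕ) : ℝ) + 1 := by
    have := (hy j).1.trans (hx j).2
    rwa [div_le_div_iff_of_pos_right hk0] at this
  have h1' : ((p j : ℕ) : ℤ) ≤ ((q j : ℕ) : ℤ) + 1 := by exact_mod_cast h1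
  have h2' : ((q j : ℕ) : ℤ) ≤ ((p j : ℕ) : ℤ) + 1 := by exact_mod_cast h2
  rw [abs_le]
  omega

lemma inter_of_adj (hk : 1 ≤ k) {p q : Fin n → Fin k} (h : Adj p q) :
    (subcube n k p ∩ subcube n k q).Nonempty := by
  have hk0 : (0 : ℝ) < k := by exact_mod_cast hk
  refine ⟨fun s => (max (p s : ℕ) (q s : ℕ) : ℝ) / k, fun s => ⟨?_, ?_⟩, fun s => ⟨?_, ?_⟩⟩
  · rw [div_le_div_iff_of_pos_right hk0]
    exact_mod_cast Nat.le_max_left _ _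
  · rw [div_le_div_iff_of_pos_right hk0]
    have := h s
    rw [abs_le] at this
    have hm : max (p s : ℕ) (q s : ℕ) ≤ (p s : ℕ) + 1 := by omega
    exact_mod_cast hm
  · rw [div_le_div_iff_of_pos_right hk0]
    exact_mod_cast Nat.le_max_right _ _
  · rw [div_le_div_iff_of_pos_right hk0]
    have := h s
    rw [abs_le] at this
    have hm : max (p s : ℕ) (q s : ℕ) ≤ (q s : ℕ) + 1 := by omega
    exact_mod_cast hm

lemma chain_union_preconnected (hk : 1 ≤ k) :
    ∀ (N : ℕ) (c : Fin (N + 1) → Fin n → Fin k),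
    (∀ (t : Fin N) (j : Fin n), |((c t.castSucc j : ℕ) : ℤ) - ((c t.succ j : ℕ) : ℤ)| ≤ 1) →
    IsPreconnected (⋃ t, subcube n k (c t)) := by
  intro N
  induction N with
  | zero =>
    intro c _
    have : (⋃ t : Fin 1, subcube n k (c t)) = subcube n k (c 0) := by
      refine Set.iUnion_eq_const fun t => ?_
      rw [Subsingleton.elim t 0]
    rw [this]
    exact (convex_subcube _).isPreconnected
  | succ N ih =>
    intro c hc
    have h1 : IsPreconnected (⋃ t : Fin (N + 1), subcube n k (c t.castSucc)) := by
      apply ih (fun t => c t.castSucc)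
      intro t j
      have := hc t.castSucc j
      rwa [Fin.succ_castSucc] at this
    have hadj : Adj (c (Fin.last N).castSucc) (c (Fin.last (N + 1))) := by
      intro j
      have := hc (Fin.last N) j
      rwa [Fin.succ_last] at this
    obtain ⟨x, hx1, hx2⟩ := inter_of_adj hk hadj
    have hun : (⋃ t : Fin (N + 2), subcube n k (c t)) =
        (⋃ t : Fin (N + 1), subcube n k (c t.castSucc)) ∪ subcube n k (c (Fin.last (N + 1))) := by
      ext y
      simp only [Set.mem_iUnion, Set.mem_union]
      constructor
      · rintro ⟨t, ht⟩
        induction t using Fin.lastCases with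
        | last => exact Or.inr ht
        | cast s => exact Or.inl ⟨s, ht⟩
      · rintro (⟨s, hs⟩ | hlast)
        · exact ⟨s.castSucc, hs⟩
        · exact ⟨Fin.last (N + 1), hlast⟩
    rw [hun]
    exact IsPreconnected.union x (Set.mem_iUnion.mpr ⟨Fin.last N, hx1⟩) hx2 h1
      (convex_subcube _).isPreconnected

lemma chain_of_reach (𝒮 : Set (Fin n → Fin k)) {p q : Fin n → Fin k} (hp : p ∈ 𝒮)
    (h : Relation.ReflTransGen (fun a b => b ∈ 𝒮 ∧ Adj a b) p q) :
    ∃ (N : ℕ) (c : Fin (N + 1) → (Fin n → Fin k)),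
      (∀ t, c t ∈ 𝒮) ∧ c 0 = p ∧ c (Fin.last N) = q ∧
      ∀ (t : Fin N) (j : Fin n), |((c t.castSucc j : ℕ) : ℤ) - ((c t.succ j : ℕ) : ℤ)| ≤ 1 := by
  induction h with
  | refl => exact ⟨0, fun _ => p, fun _ => hp, rfl, rfl, fun t => t.elim0⟩
  | @tail b r _ hbr ih =>
    obtain ⟨N, c, hmem, h0, hlast, hstep⟩ := ih
    refine ⟨N + 1, Fin.snoc c r, ?_, ?_, ?_, ?_⟩
    · intro t
      induction t using Fin.lastCases with
      | last => rw [Fin.snoc_last]; exact hbr.1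
      | cast s => rw [Fin.snoc_castSucc]; exact hmem s
    · rw [show (0 : Fin (N + 2)) = Fin.castSucc 0 from rfl, Fin.snoc_castSucc]
      exact h0
    · rw [Fin.snoc_last]
    · intro t j
      induction t using Fin.lastCases with
      | last =>
        rw [Fin.succ_last, Fin.snoc_last, Fin.snoc_castSucc, hlast]
        exact hbr.2 j
      | cast s =>
        rw [Fin.succ_castSucc, Fin.snoc_castSucc, Fin.snoc_castSucc]
        exact hstep s j

end SubcubeAux

open SubcubeAux in
/-- A union of subdivision cubes is connected iff the corresponding index set is
1-connected in the `ℓ∞` metric. -/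
theorem union_subcubes_connected_iff_oneConnected (n k : ℕ) (hk : 1 ≤ k)
    (𝒮 : Set (Fin n → Fin k)) :
    IsPreconnected (⋃ i ∈ 𝒮, subcube n k i) ↔ OneConnectedIdx n k 𝒮 := by
  constructor
  · intro hpre p hp q hq
    set R : (Fin n → Fin k) → (Fin n → Fin k) → Prop := fun a b => b ∈ 𝒮 ∧ Adj a b with hR
    by_cases hreach : Relation.ReflTransGen R p q
    · exact chain_of_reach 𝒮 hp hreach
    · exfalso
      set A : Set (Fin n → ℝ) :=
        ⋃ i ∈ {i ∈ 𝒮 | Relation.ReflTransGen R p i}, subcube n k i with hA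
      set B : Set (Fin n → ℝ) :=
        ⋃ i ∈ {i ∈ 𝒮 | ¬ Relation.ReflTransGen R p i}, subcube n k i with hB
      have hAc : IsClosed A :=
        Set.Finite.isClosed_biUnion (Set.toFinite _) fun i _ => isClosed_subcube i
      have hBc : IsClosed B :=
        Set.Finite.isClosed_biUnion (Set.toFinite _) fun i _ => isClosed_subcube i
      have hsub : (⋃ i ∈ 𝒮, subcube n k i) ⊆ A ∪ B := by
        intro x hx
        simp only [Set.mem_iUnion] at hx
        obtain ⟨i, hi, hxi⟩ := hx
        by_cases hri : Relation.ReflTransGen R p i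
        · left; exact Set.mem_biUnion ⟨hi, hri⟩ hxi
        · right; exact Set.mem_biUnion ⟨hi, hri⟩ hxi
      obtain ⟨xp, hxp⟩ := subcube_nonempty hk p
      obtain ⟨xq, hxq⟩ := subcube_nonempty hk q
      have hxpA : xp ∈ A := Set.mem_biUnion ⟨hp, Relation.ReflTransGen.refl⟩ hxp
      have hxqB : xq ∈ B := Set.mem_biUnion ⟨hq, hreach⟩ hxq
      have h1 : ((⋃ i ∈ 𝒮, subcube n k i) ∩ A).Nonempty :=
        ⟨xp, Set.mem_biUnion hp hxp, hxpA⟩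
      have h2 : ((⋃ i ∈ 𝒮, subcube n k i) ∩ B).Nonempty :=
        ⟨xq, Set.mem_biUnion hq hxq, hxqB⟩
      obtain ⟨x, _, hxA, hxB⟩ :=
        (isPreconnected_closed_iff.mp hpre) A B hAc hBc hsub h1 h2
      simp only [hA, hB, Set.mem_iUnion, Set.mem_setOf_eq] at hxA hxB
      obtain ⟨i, ⟨hi𝒮, hri⟩, hxi⟩ := hxA
      obtain ⟨j, ⟨hj𝒮, hrj⟩, hxj⟩ := hxB
      have hadj : Adj i j := adj_of_inter hk ⟨x, hxi, hxj⟩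
      exact hrj (hri.tail ⟨hj𝒮, hadj⟩)
  · intro h1c
    apply isPreconnected_of_forall_pair
    intro x hx y hy
    simp only [Set.mem_iUnion] at hx hy
    obtain ⟨p, hp, hxp⟩ := hx
    obtain ⟨q, hq, hyq⟩ := hy
    obtain ⟨N, c, hmem, h0, hlast, hstep⟩ := h1c p hp q hq
    refine ⟨⋃ t, subcube n k (c t), ?_, ?_, ?_, ?_⟩
    · intro z hz
      simp only [Set.mem_iUnion] at hz ⊢
      obtain ⟨t, ht⟩ := hz
      exact ⟨c t, hmem t, ht⟩
    · exact Set.mem_iUnion.mpr ⟨0, h0 ▸ hxp⟩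
    · exact Set.mem_iUnion.mpr ⟨Fin.last N, hlast ▸ hyq⟩
    · exact chain_union_preconnected hk N c hstep
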